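/- arXiv:1806.10603 — 5 statements merged into one kernel-verified Lean document; each statement's English description precedes it below -/
import Mathlib

section
/- Under the constraints ((m₁/m₂)ε − 1)/(1 + (m₁/m₂)ε) ≤ δ ≤ 1 and 0 ≤ γ ≤ (m₁/d)(1−δ)[(1 + (m₁/m₂)ε)δ + 1 − (m₁/m₂)ε], the quantity Λ₂₁ := [ (1/d)·ε·m₁·(1−δ)·((m₁/m₂)·ε·(δ−1) + δ + 1) − ε·γ ]·|u₁−u₂|² + ε(1−α)Λ₁ + (1 − ε(1−α))Λ₂ is nonnegative, provided 0 ≤ α ≤ 1, 0 < ε ≤ 1, Λ₁, Λ₂ ≥ 0. -/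
open Real

/-- Nonnegativity of the mixture translational temperature Λ₂₁ under the admissibility
constraints on δ and γ. -/
theorem mixture_temperature_Lambda21_nonneg (d : ℕ) (hd : 1 ≤ d)
    (m₁ m₂ ε α δ γ Λ₁ Λ₂ : ℝ)
    (hm₁ : 0 < m₁) (hm₂ : 0 < m₂) (hε0 : 0 < ε) (hε1 : ε ≤ 1)
    (hα0 : 0 ≤ α) (hα1 : α ≤ 1) (hΛ₁ : 0 ≤ Λ₁) (hΛ₂ : 0 ≤ Λ₂)
    (u₁ u₂ : EuclideanSpace ℝ (Fin d))
    (hδl : (m₁ / m₂ * ε - 1) / (1 + m₁ / m₂ * ε) ≤ δ) (hδu : δ ≤ 1)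
    (hγ0 : 0 ≤ γ)
    (hγu : γ ≤ m₁ / d * (1 - δ) * ((1 + m₁ / m₂ * ε) * δ + 1 - m₁ / m₂ * ε)) :
    0 ≤ (1 / d * ε * m₁ * (1 - δ) * (m₁ / m₂ * ε * (δ - 1) + δ + 1) - ε * γ) * ‖u₁ - u₂‖ ^ 2
        + ε * (1 - α) * Λ₁ + (1 - ε * (1 - α)) * Λ₂ := by
  have hd0 : (0:ℝ) < d := by exact_mod_cast hd
  have hn : (0:ℝ) ≤ ‖u₁ - u₂‖ ^ 2 := sq_nonneg _
  have hcoef : 0 ≤ 1 / d * ε * m₁ * (1 - δ) * (m₁ / m₂ * ε * (δ - 1) + δ + 1) - ε * γ := by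
    have : 1 / d * ε * m₁ * (1 - δ) * (m₁ / m₂ * ε * (δ - 1) + δ + 1) - ε * γ
        = ε * (m₁ / d * (1 - δ) * ((1 + m₁ / m₂ * ε) * δ + 1 - m₁ / m₂ * ε) - γ) := by
      field_simp; ring
    rw [this]
    exact mul_nonneg hε0.le (by linarith)
  have h1 : 0 ≤ ε * (1 - α) * Λ₁ :=
    mul_nonneg (mul_nonneg hε0.le (by linarith)) hΛ₁
  have h2 : 0 ≤ (1 - ε * (1 - α)) * Λ₂ := by
    have : ε * (1 - α) ≤ 1 := by nlinarith
    exact mul_nonneg (by linarith) hΛ₂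
  have := mul_nonneg hcoef hn
  linarith
end

section
/- Let f : ℝ^N → ℝ be nonnegative and measurable with (1+|ξ|²)f ∈ L¹ and N_q(f) := sup_ξ |ξ|^q f(ξ) < ∞ for some q > N+2. Define n = ∫ f dξ, n·ū = ∫ ξ f dξ, N·n·T = ∫|ξ−ū|² f dξ. Then there exists a constant C_q depending only on q and N such that n·(T + |ū|²)^{(q−N)/2} ≤ C_q · N_q(f). -/
open MeasureTheory Real RealInnerProductSpace Pointwise

lemma tail_integrableOn (N : ℕ) (q : ℝ) (hq : (N : ℝ) + 2 < q) {R : ℝ} (hR : 0 < R) :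
    IntegrableOn (fun x : EuclideanSpace ℝ (Fin N) => ‖x‖ ^ (2 - q))
      {x : EuclideanSpace ℝ (Fin N) | R < ‖x‖} := by
  have hq2 : (Module.finrank ℝ (EuclideanSpace ℝ (Fin N)) : ℝ) < q - 2 := by
    rw [finrank_euclideanSpace_fin]; linarith
  have hint : Integrable (fun x : EuclideanSpace ℝ (Fin N) =>
      (R⁻¹ + 1) ^ (q - 2) * (1 + ‖x‖) ^ (-(q - 2))) :=
    (integrable_one_add_norm hq2).const_mul _
  have hS : MeasurableSet {x : EuclideanSpace ℝ (Fin N) | R < ‖x‖} :=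
    (isOpen_lt continuous_const continuous_norm).measurableSet
  refine Integrable.mono' hint.integrableOn ?_ ?_
  · exact (Measurable.aestronglyMeasurable (by fun_prop)).restrict
  · rw [ae_restrict_iff' hS]
    refine ae_of_all _ fun x hx => ?_
    have hx' : R < ‖x‖ := hx
    have hx0 : 0 < ‖x‖ := hR.trans hx'
    have hRi : (0:ℝ) < R⁻¹ + 1 := by positivity
    have h1 : (1 + ‖x‖) / (R⁻¹ + 1) ≤ ‖x‖ := by
      rw [div_le_iff₀ hRi]
      have : 1 ≤ R⁻¹ * ‖x‖ := by
        rw [inv_mul_eq_div, le_div_iff₀ hR, one_mul]; exact hx'.le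
      nlinarith
    have h2 : ‖x‖ ^ (2 - q) ≤ ((1 + ‖x‖) / (R⁻¹ + 1)) ^ (2 - q) :=
      rpow_le_rpow_of_nonpos (by positivity) h1 (by linarith)
    rw [Real.norm_eq_abs, abs_of_nonneg (rpow_nonneg (norm_nonneg x) _)]
    refine h2.trans ?_
    rw [Real.div_rpow (by positivity) hRi.le]
    rw [div_eq_mul_inv, ← Real.rpow_neg hRi.le, neg_sub, mul_comm]
    have h3 : (0:ℝ) ≤ (1 + ‖x‖) ^ (2 - q) := rpow_nonneg (by positivity) _
    rw [show -(q-2) = 2 - q by ring]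

lemma tail_integral (N : ℕ) (q : ℝ) {R : ℝ} (hR : 0 < R) :
    ∫ x in {x : EuclideanSpace ℝ (Fin N) | R < ‖x‖}, ‖x‖ ^ (2 - q)
      = R ^ ((N : ℝ) + 2 - q) *
        ∫ x in {x : EuclideanSpace ℝ (Fin N) | 1 < ‖x‖}, ‖x‖ ^ (2 - q) := by
  have hs : R • {x : EuclideanSpace ℝ (Fin N) | 1 < ‖x‖}
      = {x : EuclideanSpace ℝ (Fin N) | R < ‖x‖} := by
    ext y
    rw [Set.mem_smul_set_iff_inv_smul_mem₀ hR.ne']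
    simp only [Set.mem_setOf_eq, norm_smul, norm_inv, Real.norm_eq_abs, abs_of_pos hR]
    rw [inv_mul_eq_div, lt_div_iff₀ hR, one_mul]
  have h := MeasureTheory.Measure.setIntegral_comp_smul_of_pos volume
      (fun x : EuclideanSpace ℝ (Fin N) => ‖x‖ ^ (2 - q))
      {x : EuclideanSpace ℝ (Fin N) | 1 < ‖x‖} hR
  rw [hs] at h
  have hL : (∫ x in {x : EuclideanSpace ℝ (Fin N) | 1 < ‖x‖}, ‖R • x‖ ^ (2 - q))
      = R ^ (2 - q) * ∫ x in {x : EuclideanSpace ℝ (Fin N) | 1 < ‖x‖}, ‖x‖ ^ (2 - q) := by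
    rw [← MeasureTheory.integral_const_mul]
    refine integral_congr_ae (ae_of_all _ fun x => ?_)
    simp only
    rw [norm_smul, Real.norm_eq_abs, abs_of_pos hR, Real.mul_rpow hR.le (norm_nonneg x)]
  rw [hL, finrank_euclideanSpace_fin, smul_eq_mul] at h
  have hRN : (0:ℝ) < R ^ N := pow_pos hR N
  field_simp at h
  rw [← h]
  rw [show (N:ℝ) + 2 - q = (N:ℝ) + (2 - q) by ring, Real.rpow_add hR, Real.rpow_natCast]
  ring

set_option maxHeartbeats 1000000 in
/-- Estimate (ii.1): n (T + |ubar|²)^{(q−N)/2} ≤ C_q N_q(f) for q > N + 2. -/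
theorem weighted_moment_bound (N : ℕ) (hN : 1 ≤ N) (q : ℝ) (hq : (N : ℝ) + 2 < q) :
    ∃ C : ℝ, 0 < C ∧
      ∀ (f : EuclideanSpace ℝ (Fin N) → ℝ) (n T : ℝ) (ubar : EuclideanSpace ℝ (Fin N)),
        Measurable f → (∀ ξ, 0 ≤ f ξ) →
        Integrable (fun ξ => (1 + ‖ξ‖ ^ 2) * f ξ) →
        BddAbove (Set.range fun ξ => ‖ξ‖ ^ q * f ξ) →
        n = (∫ ξ, f ξ) →
        n • ubar = (∫ ξ, f ξ • ξ) →
        (N : ℝ) * n * T = (∫ ξ, ‖ξ - ubar‖ ^ 2 * f ξ) →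
        n * (T + ‖ubar‖ ^ 2) ^ ((q - N) / 2) ≤ C * ⨆ ξ, ‖ξ‖ ^ q * f ξ := by
  have hN1 : (1:ℝ) ≤ (N:ℝ) := by exact_mod_cast hN
  have hqN : (0:ℝ) < q - N := by linarith
  have hq0 : (0:ℝ) < q := by linarith
  set A := ∫ x in {x : EuclideanSpace ℝ (Fin N) | 1 < ‖x‖}, ‖x‖ ^ (2 - q) with hA
  have hA0 : 0 ≤ A :=
    setIntegral_nonneg (isOpen_lt continuous_const continuous_norm).measurableSet
      (fun x _ => rpow_nonneg (norm_nonneg x) _)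
  have hB : (0:ℝ) < A + 1 := by linarith
  refine ⟨2 ^ ((q - N) / 2) * (A + 1), by positivity, ?_⟩
  intro f n T ubar hfm hf0 hint hbdd hn hu hT
  haveI : Nontrivial (EuclideanSpace ℝ (Fin N)) := by
    refine ⟨EuclideanSpace.single ⟨0, hN⟩ (1:ℝ), 0, fun h => ?_⟩
    have := congrArg norm h
    rw [EuclideanSpace.norm_single, norm_zero, norm_one] at this
    exact one_ne_zero this
  set M := ⨆ ξ, ‖ξ‖ ^ q * f ξ with hM
  have hMle : ∀ ξ, ‖ξ‖ ^ q * f ξ ≤ M := fun ξ => le_ciSup hbdd ξ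
  have hM0 : 0 ≤ M := by
    have := hMle 0
    rwa [norm_zero, Real.zero_rpow hq0.ne', zero_mul] at this
  -- integrability facts
  have hf_int : Integrable f := by
    refine hint.mono hfm.aestronglyMeasurable (ae_of_all _ fun ξ => ?_)
    rw [Real.norm_eq_abs, Real.norm_eq_abs, abs_of_nonneg (hf0 ξ),
      abs_of_nonneg (mul_nonneg (by positivity) (hf0 ξ))]
    nlinarith [hf0 ξ, sq_nonneg ‖ξ‖]
  have hf2_int : Integrable (fun ξ : EuclideanSpace ℝ (Fin N) => ‖ξ‖ ^ 2 * f ξ) := by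
    refine hint.mono ((measurable_norm.pow_const 2).mul hfm).aestronglyMeasurable
      (ae_of_all _ fun ξ => ?_)
    rw [Real.norm_eq_abs, Real.norm_eq_abs,
      abs_of_nonneg (mul_nonneg (by positivity) (hf0 ξ)),
      abs_of_nonneg (mul_nonneg (by positivity) (hf0 ξ))]
    nlinarith [hf0 ξ]
  have hfs_int : Integrable (fun ξ : EuclideanSpace ℝ (Fin N) => f ξ • ξ) := by
    refine hint.mono (hfm.smul measurable_id).aestronglyMeasurable
      (ae_of_all _ fun ξ => ?_)
    rw [norm_smul, Real.norm_eq_abs, Real.norm_eq_abs, abs_of_nonneg (hf0 ξ),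
      abs_of_nonneg (mul_nonneg (by positivity) (hf0 ξ))]
    nlinarith [hf0 ξ, sq_nonneg (‖ξ‖ - 1), norm_nonneg ξ]
  set m2 := ∫ ξ : EuclideanSpace ℝ (Fin N), ‖ξ‖ ^ 2 * f ξ with hm2
  -- the moment identity
  have hkey : (N:ℝ) * n * T + n * ‖ubar‖ ^ 2 = m2 := by
    have hg2 : Integrable (fun ξ : EuclideanSpace ℝ (Fin N) => ⟪ubar, f ξ • ξ⟫) :=
      hfs_int.const_inner ubar
    have hexp : ∀ ξ : EuclideanSpace ℝ (Fin N), ‖ξ - ubar‖ ^ 2 * f ξ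
        = ‖ξ‖ ^ 2 * f ξ - 2 * ⟪ubar, f ξ • ξ⟫ + ‖ubar‖ ^ 2 * f ξ := by
      intro ξ
      rw [real_inner_smul_right, norm_sub_sq_real, real_inner_comm ξ ubar]
      ring
    have hI2 : (∫ ξ : EuclideanSpace ℝ (Fin N), ⟪ubar, f ξ • ξ⟫) = n * ‖ubar‖ ^ 2 := by
      rw [integral_inner hfs_int ubar, ← hu, real_inner_smul_right,
        real_inner_self_eq_norm_sq]
    have i1 : Integrable (fun ξ : EuclideanSpace ℝ (Fin N) =>
        ‖ξ‖ ^ 2 * f ξ - 2 * ⟪ubar, f ξ • ξ⟫) := hf2_int.sub (hg2.const_mul 2)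
    rw [hT]
    simp only [hexp]
    rw [integral_add i1 (hf_int.const_mul (‖ubar‖ ^ 2)),
      integral_sub hf2_int (hg2.const_mul 2), MeasureTheory.integral_const_mul,
      MeasureTheory.integral_const_mul, hI2, ← hn]
    ring
  have hnn : 0 ≤ n := hn ▸ integral_nonneg hf0
  have hm2nn : 0 ≤ m2 := integral_nonneg (fun ξ => mul_nonneg (by positivity) (hf0 ξ))
  rcases hnn.eq_or_lt with hn0 | hn0
  · rw [← hn0, zero_mul]
    exact mul_nonneg (by positivity) hM0
  -- main case : 0 < n
  have hMpos : 0 < M := by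
    rcases hM0.eq_or_lt with h | h
    · exfalso
      have hfz : ∀ ξ : EuclideanSpace ℝ (Fin N), ξ ≠ 0 → f ξ = 0 := by
        intro ξ hξ
        have h1 := hMle ξ
        rw [← h] at h1
        have h2 : 0 < ‖ξ‖ ^ q := rpow_pos_of_pos (norm_pos_iff.2 hξ) q
        nlinarith [hf0 ξ]
      have hae : f =ᵐ[volume] 0 := by
        refine measure_mono_null (fun ξ hξ => ?_) (measure_singleton (0 : EuclideanSpace ℝ (Fin N)))
        simp only [Set.mem_setOf_eq, Set.mem_singleton_iff] at *
        by_contra h0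
        exact hξ (hfz ξ h0)
      have : n = 0 := by rw [hn, integral_congr_ae hae]; simp
      linarith
    · exact h
  have hTnn : 0 ≤ T := by
    have h1 : 0 ≤ (N:ℝ) * n * T := by
      rw [hT]; exact integral_nonneg fun ξ => mul_nonneg (by positivity) (hf0 ξ)
    by_contra hc
    push_neg at hc
    have hNn : 0 < (N:ℝ) * n := mul_pos (by linarith) hn0
    nlinarith [mul_pos hNn (neg_pos.2 hc)]
  -- choice of R
  set R := ((A + 1) * M / n) ^ (q - (N:ℝ))⁻¹ with hR
  have hRpos : 0 < R := rpow_pos_of_pos (by positivity) _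
  have hRqN : R ^ (q - (N:ℝ)) = (A + 1) * M / n := by
    rw [hR, ← Real.rpow_mul (by positivity), inv_mul_cancel₀ hqN.ne', Real.rpow_one]
  -- splitting the second moment
  set S := {x : EuclideanSpace ℝ (Fin N) | R < ‖x‖} with hS
  have hSmeas : MeasurableSet S := (isOpen_lt continuous_const continuous_norm).measurableSet
  have hsplit : m2 = (∫ ξ in S, ‖ξ‖ ^ 2 * f ξ) + ∫ ξ in Sᶜ, ‖ξ‖ ^ 2 * f ξ :=
    (integral_add_compl hSmeas hf2_int).symm
  have htail_int : IntegrableOn (fun x : EuclideanSpace ℝ (Fin N) => ‖x‖ ^ (2 - q)) S :=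
    tail_integrableOn N q hq hRpos
  have h_in : (∫ ξ in Sᶜ, ‖ξ‖ ^ 2 * f ξ) ≤ R ^ 2 * n := by
    have h1 : (∫ ξ in Sᶜ, ‖ξ‖ ^ 2 * f ξ) ≤ ∫ ξ in Sᶜ, R ^ 2 * f ξ := by
      refine setIntegral_mono_on hf2_int.integrableOn
        ((hf_int.const_mul _).integrableOn) hSmeas.compl (fun ξ hξ => ?_)
      have hle : ‖ξ‖ ≤ R := not_lt.1 hξ
      have h2 : ‖ξ‖ ^ 2 ≤ R ^ 2 := by nlinarith [norm_nonneg ξ]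
      exact mul_le_mul_of_nonneg_right h2 (hf0 ξ)
    refine h1.trans ?_
    rw [MeasureTheory.integral_const_mul]
    refine mul_le_mul_of_nonneg_left ?_ (by positivity)
    rw [hn]
    exact setIntegral_le_integral hf_int (ae_of_all _ hf0)
  have h_out : (∫ ξ in S, ‖ξ‖ ^ 2 * f ξ) ≤ M * (R ^ ((N:ℝ) + 2 - q) * A) := by
    have h1 : (∫ ξ in S, ‖ξ‖ ^ 2 * f ξ) ≤ ∫ ξ in S, M * ‖ξ‖ ^ (2 - q) := by
      refine setIntegral_mono_on hf2_int.integrableOn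
        (htail_int.const_mul _) hSmeas (fun ξ hξ => ?_)
      have hξ0 : 0 < ‖ξ‖ := hRpos.trans hξ
      have he : ‖ξ‖ ^ (2:ℕ) = ‖ξ‖ ^ (2 - q) * ‖ξ‖ ^ q := by
        rw [← Real.rpow_add hξ0, sub_add_cancel, ← Real.rpow_natCast]
        norm_num
      rw [he, mul_assoc, mul_comm M]
      exact mul_le_mul_of_nonneg_left (hMle ξ) (rpow_nonneg (norm_nonneg ξ) (2 - q))
    refine h1.trans ?_
    rw [MeasureTheory.integral_const_mul, tail_integral N q hRpos]
  have hm2le : m2 ≤ 2 * R ^ 2 * n := by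
    have hAB : M * (R ^ ((N:ℝ) + 2 - q) * A) ≤ M * (R ^ ((N:ℝ) + 2 - q) * (A + 1)) := by
      have : (0:ℝ) ≤ R ^ ((N:ℝ) + 2 - q) := rpow_nonneg hRpos.le _
      nlinarith
    have hterm : M * (R ^ ((N:ℝ) + 2 - q) * (A + 1)) = R ^ 2 * n := by
      have h1 : R ^ ((N:ℝ) + 2 - q) = R ^ (2:ℝ) / R ^ (q - (N:ℝ)) := by
        rw [← Real.rpow_sub hRpos]; congr 1; ring
      rw [h1, hRqN, Real.rpow_two]
      field_simp
    calc m2 = (∫ ξ in S, ‖ξ‖ ^ 2 * f ξ) + ∫ ξ in Sᶜ, ‖ξ‖ ^ 2 * f ξ := hsplit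
    _ ≤ M * (R ^ ((N:ℝ) + 2 - q) * A) + R ^ 2 * n := add_le_add h_out h_in
    _ ≤ M * (R ^ ((N:ℝ) + 2 - q) * (A + 1)) + R ^ 2 * n := by linarith
    _ = 2 * R ^ 2 * n := by rw [hterm]; ring
  -- conclude
  have hrho : T + ‖ubar‖ ^ 2 ≤ 2 * R ^ 2 := by
    have h1 : n * (T + ‖ubar‖ ^ 2) ≤ m2 := by
      nlinarith [mul_nonneg (mul_nonneg (sub_nonneg.2 hN1) hn0.le) hTnn]
    have h2 : n * (T + ‖ubar‖ ^ 2) ≤ n * (2 * R ^ 2) := by nlinarith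
    exact le_of_mul_le_mul_left h2 hn0
  have hrho0 : 0 ≤ T + ‖ubar‖ ^ 2 := by positivity
  have hstep : n * (T + ‖ubar‖ ^ 2) ^ ((q - N) / 2) ≤ n * (2 * R ^ 2) ^ ((q - N) / 2) :=
    mul_le_mul_of_nonneg_left (Real.rpow_le_rpow hrho0 hrho (by positivity)) hnn
  refine hstep.trans ?_
  have hfin : (2 * R ^ 2 : ℝ) ^ ((q - N) / 2) = 2 ^ ((q - N) / 2) * R ^ (q - (N:ℝ)) := by
    rw [Real.mul_rpow (by norm_num) (by positivity)]
    congr 1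
    rw [← Real.rpow_natCast R 2, ← Real.rpow_mul hRpos.le]
    congr 1
    push_cast
    ring
  rw [hfin, hRqN]
  rw [show n * (2 ^ ((q - N) / 2) * ((A + 1) * M / n)) = 2 ^ ((q - N) / 2) * (A + 1) * M by
    field_simp]
end

section
/- Let f : ℝ^N → ℝ be nonnegative measurable with (1+|ξ|²)f ∈ L¹, n = ∫ f dξ > 0, n·ū = ∫ ξ f dξ, N·n·T = ∫|ξ−ū|² f dξ > 0. Then for any q > 1 there is a constant C_q such that n·|ū|^{N+q} / [ (T + |ū|²)·T ]^{N/2} ≤ C_q · sup_ξ |ξ|^q f(ξ). -/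
/-!
Write `s = |ū|` and `M = N_q(f)`. If `s² ≥ 8NT`, Chebyshev's inequality around `ū` leaves half
of the mass in the ball `B(ū, √(2NT))`, on which `|ξ| ≥ s/2` and hence `f ≤ 2^q M s^{-q}`; so
`n s^q ≲ M T^{N/2}`, and `s^N ≤ (T + s²)^{N/2}`.
If `s² < 8NT`, bound `n s` by the first moment `∫ |ξ| f` and split it: where `|ξ| ≤ s/4` it is at
most `n s / 4`; where `s/4 < |ξ| ≤ R := 72NT/s` use `|ξ| f ≤ (s/4)^{1-q} M`, which needs `q ≥ 1`;
beyond `R` use `|ξ| f ≤ |ξ|² f / R`, and the second moment is at most `18 N n T`, so this part is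
at most `n s / 4` too. Hence `n s ≲ M s^{1-q} (T/s)^N`, i.e. `n s^{N+q} ≲ M T^N`.
-/

open MeasureTheory Real Metric Module

lemma norm_add_sq_le {E : Type*} [SeminormedAddCommGroup E] (a b : E) :
    ‖a + b‖ ^ 2 ≤ 2 * ‖a‖ ^ 2 + 2 * ‖b‖ ^ 2 := by
  nlinarith [norm_add_le a b, norm_nonneg (a + b), sq_nonneg (‖a‖ - ‖b‖)]

lemma mul_le_add_of_rpow_mul_le {x y ρ q M : ℝ} (hx : 0 ≤ x) (hy : 0 ≤ y) (hρ : 0 < ρ)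
    (hq : 1 ≤ q) (hM : x ^ q * y ≤ M) : x * y ≤ ρ * y + M * ρ ^ (1 - q) := by
  have hM0 : 0 ≤ M := (mul_nonneg (by positivity) hy).trans hM
  rcases le_or_gt x ρ with h | h
  · nlinarith [rpow_nonneg hρ.le (1 - q)]
  · have hx' : 0 < x := hρ.trans h
    have hsplit : x * y = x ^ (1 - q) * (x ^ q * y) := by
      rw [← mul_assoc, ← rpow_add hx', sub_add_cancel, rpow_one]
    have hpow : x ^ (1 - q) ≤ ρ ^ (1 - q) := rpow_le_rpow_of_nonpos hρ h.le (by linarith)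
    nlinarith [mul_le_mul hpow hM (by positivity) (by positivity)]

section Moments

variable {E : Type*} [NormedAddCommGroup E] [MeasurableSpace E] {μ : Measure E} {f : E → ℝ}
  {q M : ℝ}

lemma integral_norm_sq_mul_le (hf0 : ∀ ξ, 0 ≤ f ξ) (hfi : Integrable f μ) (u : E)
    (hw : Integrable (fun ξ => ‖ξ - u‖ ^ 2 * f ξ) μ) :
    ∫ ξ, ‖ξ‖ ^ 2 * f ξ ∂μ ≤ 2 * ∫ ξ, ‖ξ - u‖ ^ 2 * f ξ ∂μ + 2 * ‖u‖ ^ 2 * ∫ ξ, f ξ ∂μ := by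
  rw [← integral_const_mul, ← integral_const_mul,
    ← integral_add (hw.const_mul 2) (hfi.const_mul _)]
  refine integral_mono_of_nonneg (ae_of_all _ fun ξ => by have := hf0 ξ; positivity)
    ((hw.const_mul 2).add (hfi.const_mul _)) (ae_of_all _ fun ξ => ?_)
  have h := mul_le_mul_of_nonneg_right (sub_add_cancel ξ u ▸ norm_add_sq_le (ξ - u) u) (hf0 ξ)
  dsimp only
  linarith

section

variable [OpensMeasurableSpace E]

lemma integrable_norm_sub_pow_mul (hf : AEStronglyMeasurable f μ) (hf0 : ∀ ξ, 0 ≤ f ξ)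
    (hI : Integrable (fun ξ => (1 + ‖ξ‖ ^ 2) * f ξ) μ) (u : E) {k : ℕ} (hk : k ≤ 2) :
    Integrable (fun ξ => ‖ξ - u‖ ^ k * f ξ) μ := by
  refine (hI.const_mul (2 + 2 * ‖u‖ ^ 2)).mono'
    ((by fun_prop : Continuous fun ξ => ‖ξ - u‖ ^ k).aestronglyMeasurable.mul hf)
    (ae_of_all _ fun ξ => ?_)
  have hpow : ‖ξ - u‖ ^ k ≤ 1 + ‖ξ - u‖ ^ 2 := by
    rcases le_total ‖ξ - u‖ 1 with h | h
    · linarith [pow_le_one₀ (norm_nonneg _) h (n := k), sq_nonneg ‖ξ - u‖]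
    · linarith [pow_le_pow_right₀ h hk]
  have hsq := norm_neg u ▸ sub_eq_add_neg ξ u ▸ norm_add_sq_le ξ (-u)
  rw [norm_mul, norm_pow, norm_norm, Real.norm_of_nonneg (hf0 ξ), ← mul_assoc]
  refine mul_le_mul_of_nonneg_right ?_ (hf0 ξ)
  nlinarith [sq_nonneg ‖ξ‖, sq_nonneg ‖u‖]

lemma setIntegral_compl_closedBall_le {h : E → ℝ} (hh0 : ∀ ξ, 0 ≤ h ξ) (u : E) {r : ℝ}
    (hr : 0 < r) (k : ℕ) (hw : Integrable (fun ξ => ‖ξ - u‖ ^ k * h ξ) μ) :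
    ∫ ξ in (closedBall u r)ᶜ, h ξ ∂μ ≤ (∫ ξ, ‖ξ - u‖ ^ k * h ξ ∂μ) / r ^ k := by
  rw [le_div_iff₀ (pow_pos hr k), ← integral_mul_const]
  calc ∫ ξ in (closedBall u r)ᶜ, h ξ * r ^ k ∂μ
      ≤ ∫ ξ in (closedBall u r)ᶜ, ‖ξ - u‖ ^ k * h ξ ∂μ := by
        refine integral_mono_of_nonneg (ae_of_all _ fun ξ => by have := hh0 ξ; positivity)
          hw.integrableOn ((ae_restrict_iff' measurableSet_closedBall.compl).2 <|
            ae_of_all _ fun ξ hξ => ?_)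
        dsimp only
        rw [mul_comm]
        have hξ : r < ‖ξ - u‖ := by simpa [dist_eq_norm] using hξ
        exact mul_le_mul_of_nonneg_right (pow_le_pow_left₀ hr.le hξ.le k) (hh0 ξ)
    _ ≤ ∫ ξ, ‖ξ - u‖ ^ k * h ξ ∂μ :=
        setIntegral_le_integral hw (ae_of_all _ fun ξ => by have := hh0 ξ; positivity)

section

variable [ProperSpace E] [IsFiniteMeasureOnCompacts μ]

lemma integral_le_of_concentrated (hf0 : ∀ ξ, 0 ≤ f ξ) (hfi : Integrable f μ) (hq : 0 ≤ q)
    (hM : ∀ ξ, ‖ξ‖ ^ q * f ξ ≤ M) {u : E} {r : ℝ} (hr : 0 < r) (hru : 2 * r ≤ ‖u‖)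
    (hw : Integrable (fun ξ => ‖ξ - u‖ ^ 2 * f ξ) μ)
    (hvar : ∫ ξ, ‖ξ - u‖ ^ 2 * f ξ ∂μ ≤ r ^ 2 / 2 * ∫ ξ, f ξ ∂μ) :
    ∫ ξ, f ξ ∂μ ≤ 2 * (M / (‖u‖ / 2) ^ q) * μ.real (closedBall u r) := by
  have hout : ∫ ξ in (closedBall u r)ᶜ, f ξ ∂μ ≤ (∫ ξ, f ξ ∂μ) / 2 := by
    refine (setIntegral_compl_closedBall_le hf0 u hr 2 hw).trans ?_
    rw [div_le_iff₀ (by positivity)]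
    linarith
  have hin : ∫ ξ in closedBall u r, f ξ ∂μ ≤ M / (‖u‖ / 2) ^ q * μ.real (closedBall u r) := by
    refine (Real.le_norm_self _).trans (norm_setIntegral_le_of_norm_le_const
      measure_closedBall_lt_top fun ξ hξ => ?_)
    have hξu : ‖u‖ / 2 ≤ ‖ξ‖ := by
      have := norm_le_insert' u ξ
      rw [mem_closedBall, dist_eq_norm, ← norm_neg, neg_sub] at hξ
      linarith
    have hu : 0 < ‖u‖ / 2 := by linarith
    rw [Real.norm_eq_abs, abs_of_nonneg (hf0 ξ), le_div_iff₀ (by positivity), mul_comm]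
    exact (mul_le_mul_of_nonneg_right (rpow_le_rpow hu.le hξu hq) (hf0 ξ)).trans (hM ξ)
  have := integral_add_compl (measurableSet_closedBall (x := u) (ε := r)) hfi
  linarith

lemma integral_norm_mul_le (hf0 : ∀ ξ, 0 ≤ f ξ) (hfi : Integrable f μ)
    (h1 : Integrable (fun ξ => ‖ξ‖ * f ξ) μ) (h2 : Integrable (fun ξ => ‖ξ‖ ^ 2 * f ξ) μ)
    (hq : 1 ≤ q) (hM : ∀ ξ, ‖ξ‖ ^ q * f ξ ≤ M) {ρ r : ℝ} (hρ : 0 < ρ) (hr : 0 < r) :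
    ∫ ξ, ‖ξ‖ * f ξ ∂μ ≤ ρ * ∫ ξ, f ξ ∂μ + M * ρ ^ (1 - q) * μ.real (closedBall 0 r)
      + (∫ ξ, ‖ξ‖ ^ 2 * f ξ ∂μ) / r := by
  have hconst : IntegrableOn (fun _ => M * ρ ^ (1 - q)) (closedBall (0 : E) r) μ :=
    integrableOn_const measure_closedBall_lt_top.ne
  have hin : ∫ ξ in closedBall 0 r, ‖ξ‖ * f ξ ∂μ
      ≤ ρ * ∫ ξ, f ξ ∂μ + M * ρ ^ (1 - q) * μ.real (closedBall 0 r) := by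
    calc ∫ ξ in closedBall 0 r, ‖ξ‖ * f ξ ∂μ
        ≤ ∫ ξ in closedBall 0 r, (ρ * f ξ + M * ρ ^ (1 - q)) ∂μ :=
          setIntegral_mono_on h1.integrableOn ((hfi.const_mul ρ).integrableOn.add hconst)
            measurableSet_closedBall fun ξ _ =>
              mul_le_add_of_rpow_mul_le (norm_nonneg ξ) (hf0 ξ) hρ hq (hM ξ)
      _ = ρ * ∫ ξ in closedBall 0 r, f ξ ∂μ + M * ρ ^ (1 - q) * μ.real (closedBall 0 r) := by
          rw [integral_add (hfi.const_mul ρ).integrableOn hconst, integral_const_mul,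
            setIntegral_const, smul_eq_mul, mul_comm (μ.real _)]
      _ ≤ _ := add_le_add_left (mul_le_mul_of_nonneg_left
          (setIntegral_le_integral hfi (ae_of_all _ hf0)) hρ.le) _
  have hout : ∫ ξ in (closedBall 0 r)ᶜ, ‖ξ‖ * f ξ ∂μ ≤ (∫ ξ, ‖ξ‖ ^ 2 * f ξ ∂μ) / r := by
    have hsq : ∀ ξ : E, ‖ξ - 0‖ ^ 1 * (‖ξ‖ * f ξ) = ‖ξ‖ ^ 2 * f ξ := fun ξ => by
      rw [sub_zero]; ring
    have := setIntegral_compl_closedBall_le (fun ξ => mul_nonneg (norm_nonneg ξ) (hf0 ξ)) 0 hr 1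
      (by simpa only [hsq] using h2)
    simp only [hsq] at this
    rwa [pow_one] at this
  have := integral_add_compl (measurableSet_closedBall (x := 0) (ε := r)) h1
  linarith

end

end

section AddHaar

variable [NormedSpace ℝ E] [FiniteDimensional ℝ E] [BorelSpace E] (μ) [μ.IsAddHaarMeasure]

lemma sqrt_pow_eq_rpow {x : ℝ} (hx : 0 ≤ x) (d : ℕ) : √x ^ d = x ^ ((d : ℝ) / 2) := by
  rw [sqrt_eq_rpow, ← rpow_natCast, ← rpow_mul hx, one_div_mul_eq_div]

lemma mul_norm_rpow_le_of_sq_le_norm_sq (hf : AEStronglyMeasurable f μ) (hf0 : ∀ ξ, 0 ≤ f ξ)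
    (hI : Integrable (fun ξ => (1 + ‖ξ‖ ^ 2) * f ξ) μ) (hq : 0 ≤ q) (hM : ∀ ξ, ‖ξ‖ ^ q * f ξ ≤ M)
    {n T : ℝ} {u : E} (hn : n = ∫ ξ, f ξ ∂μ)
    (hT : finrank ℝ E * n * T = ∫ ξ, ‖ξ - u‖ ^ 2 * f ξ ∂μ) (hT0 : 0 < T) (hu : u ≠ 0)
    (hlarge : 8 * finrank ℝ E * T ≤ ‖u‖ ^ 2) :
    n * ‖u‖ ^ ((finrank ℝ E : ℝ) + q) ≤ 2 ^ (q + 1) * (2 * finrank ℝ E) ^ ((finrank ℝ E : ℝ) / 2)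
      * μ.real (ball 0 1) * M * ((T + ‖u‖ ^ 2) * T) ^ ((finrank ℝ E : ℝ) / 2) := by
  set d := finrank ℝ E
  set s := ‖u‖
  have hs0 : 0 < s := norm_pos_iff.2 hu
  have hd : (0 : ℝ) < d := Nat.cast_pos.2 (finrank_pos_iff_exists_ne_zero.2 ⟨u, hu⟩)
  have hM0 : 0 ≤ M := (mul_nonneg (by positivity) (hf0 0)).trans (hM 0)
  set r := √(2 * d * T)
  have hr : 0 < r := sqrt_pos.2 (by positivity)
  have hr2 : r ^ 2 = 2 * d * T := sq_sqrt (by positivity)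
  have hmass : n ≤ 2 * (M / (s / 2) ^ q) * (r ^ d * μ.real (ball 0 1)) := by
    have := integral_le_of_concentrated hf0
      (by simpa using integrable_norm_sub_pow_mul hf hf0 hI 0 zero_le_two) hq hM hr
      (by nlinarith) (integrable_norm_sub_pow_mul hf hf0 hI u le_rfl)
      (by rw [← hT, ← hn, hr2]; linarith)
    rwa [← hn, Measure.addHaar_real_closedBall μ u hr.le] at this
  have hnq : n * s ^ q ≤ 2 * (2 ^ q * M) * (r ^ d * μ.real (ball 0 1)) := by
    have hsq : M / (s / 2) ^ q * s ^ q = 2 ^ q * M := by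
      rw [div_rpow hs0.le zero_le_two]
      field_simp
    calc n * s ^ q ≤ 2 * (M / (s / 2) ^ q) * (r ^ d * μ.real (ball 0 1)) * s ^ q := by gcongr
      _ = _ := by rw [← hsq]; ring
  have hpow : s ^ (d : ℝ) ≤ (T + s ^ 2) ^ ((d : ℝ) / 2) := by
    rw [← sqrt_pow_eq_rpow (by positivity), rpow_natCast]
    exact pow_le_pow_left₀ hs0.le (le_sqrt_of_sq_le (by linarith)) d
  calc n * s ^ ((d : ℝ) + q) = (n * s ^ q) * s ^ (d : ℝ) := by rw [rpow_add hs0]; ring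
    _ ≤ (2 * (2 ^ q * M) * (r ^ d * μ.real (ball 0 1))) * (T + s ^ 2) ^ ((d : ℝ) / 2) :=
        mul_le_mul hnq hpow (by positivity) (by positivity)
    _ = _ := by
        rw [sqrt_pow_eq_rpow (by positivity), mul_rpow (by positivity) hT0.le,
          mul_rpow (by positivity) hT0.le, rpow_add_one two_ne_zero]
        ring

lemma mul_norm_le_of_norm_sq_lt (hf : AEStronglyMeasurable f μ) (hf0 : ∀ ξ, 0 ≤ f ξ)
    (hI : Integrable (fun ξ => (1 + ‖ξ‖ ^ 2) * f ξ) μ) (hq : 1 ≤ q) (hM : ∀ ξ, ‖ξ‖ ^ q * f ξ ≤ M)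
    {n T : ℝ} {u : E} (hn : n = ∫ ξ, f ξ ∂μ) (hmean : n • u = ∫ ξ, f ξ • ξ ∂μ)
    (hT : finrank ℝ E * n * T = ∫ ξ, ‖ξ - u‖ ^ 2 * f ξ ∂μ) (hT0 : 0 < T) (hu : u ≠ 0)
    (hsmall : ‖u‖ ^ 2 < 8 * finrank ℝ E * T) :
    n * ‖u‖ ≤ 2 * (M * (‖u‖ / 4) ^ (1 - q)
      * ((72 * finrank ℝ E * T / ‖u‖) ^ finrank ℝ E * μ.real (ball 0 1))) := by
  set d := finrank ℝ E
  set s := ‖u‖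
  have hs0 : 0 < s := norm_pos_iff.2 hu
  have hd : (0 : ℝ) < d := Nat.cast_pos.2 (finrank_pos_iff_exists_ne_zero.2 ⟨u, hu⟩)
  have hn0 : 0 ≤ n := hn ▸ integral_nonneg hf0
  have hfi : Integrable f μ := by
    simpa using integrable_norm_sub_pow_mul hf hf0 hI 0 zero_le_two
  have hfirst : n * s ≤ ∫ ξ, ‖ξ‖ * f ξ ∂μ := by
    calc n * s = ‖n • u‖ := by rw [norm_smul, Real.norm_of_nonneg hn0]
      _ ≤ ∫ ξ, ‖f ξ • ξ‖ ∂μ := hmean ▸ norm_integral_le_integral_norm _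
      _ = ∫ ξ, ‖ξ‖ * f ξ ∂μ := by
          simp only [norm_smul, Real.norm_of_nonneg (hf0 _), mul_comm]
  have hsecond : ∫ ξ, ‖ξ‖ ^ 2 * f ξ ∂μ ≤ 18 * d * n * T := by
    have := integral_norm_sq_mul_le hf0 hfi u (integrable_norm_sub_pow_mul hf hf0 hI u le_rfl)
    rw [← hT, ← hn] at this
    nlinarith
  set r := 72 * d * T / s
  have hr : 0 < r := by positivity
  have htail : (∫ ξ, ‖ξ‖ ^ 2 * f ξ ∂μ) / r ≤ n * s / 4 := by
    rw [div_le_iff₀ hr]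
    calc _ ≤ 18 * d * n * T := hsecond
      _ = n * s / 4 * r := by
          linear_combination (-n / 4) * (div_mul_cancel₀ (72 * d * T) hs0.ne' : r * s = _)
  have := integral_norm_mul_le hf0 hfi
    (by simpa using integrable_norm_sub_pow_mul hf hf0 hI 0 one_le_two)
    (by simpa using integrable_norm_sub_pow_mul hf hf0 hI 0 le_rfl) hq hM
    (ρ := s / 4) (by positivity) hr
  rw [← hn, Measure.addHaar_real_closedBall μ 0 hr.le] at this
  linarith

lemma mul_norm_rpow_le_of_norm_sq_lt (hf : AEStronglyMeasurable f μ) (hf0 : ∀ ξ, 0 ≤ f ξ)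
    (hI : Integrable (fun ξ => (1 + ‖ξ‖ ^ 2) * f ξ) μ) (hq : 1 ≤ q) (hM : ∀ ξ, ‖ξ‖ ^ q * f ξ ≤ M)
    {n T : ℝ} {u : E} (hn : n = ∫ ξ, f ξ ∂μ) (hmean : n • u = ∫ ξ, f ξ • ξ ∂μ)
    (hT : finrank ℝ E * n * T = ∫ ξ, ‖ξ - u‖ ^ 2 * f ξ ∂μ) (hT0 : 0 < T) (hu : u ≠ 0)
    (hsmall : ‖u‖ ^ 2 < 8 * finrank ℝ E * T) :
    n * ‖u‖ ^ ((finrank ℝ E : ℝ) + q) ≤ 2 * 4 ^ (q - 1) * (72 * finrank ℝ E) ^ (finrank ℝ E : ℝ)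
      * μ.real (ball 0 1) * M * ((T + ‖u‖ ^ 2) * T) ^ ((finrank ℝ E : ℝ) / 2) := by
  have hkey := mul_norm_le_of_norm_sq_lt μ hf hf0 hI hq hM hn hmean hT hT0 hu hsmall
  set d := finrank ℝ E
  set s := ‖u‖
  have hs0 : 0 < s := norm_pos_iff.2 hu
  have hM0 : 0 ≤ M := (mul_nonneg (by positivity) (hf0 0)).trans (hM 0)
  have h4 : (s / 4) ^ (1 - q) * s ^ ((d : ℝ) + q - 1) = 4 ^ (q - 1) * s ^ d := by
    rw [div_rpow hs0.le (by norm_num), div_mul_eq_mul_div, ← rpow_add hs0,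
      show 1 - q + ((d : ℝ) + q - 1) = d by ring, rpow_natCast,
      show (4 : ℝ) ^ (q - 1) = (4 ^ (1 - q))⁻¹ by rw [← rpow_neg (by norm_num), neg_sub]]
    field_simp
  have hT2 : T ^ d ≤ ((T + s ^ 2) * T) ^ ((d : ℝ) / 2) := by
    rw [← sqrt_pow_eq_rpow (by positivity)]
    exact pow_le_pow_left₀ hT0.le (le_sqrt_of_sq_le (by nlinarith)) d
  have hsum : (0 : ℝ) < 1 + (d + q - 1) := by rw [add_sub_cancel]; positivity
  calc n * s ^ ((d : ℝ) + q) = (n * s) * s ^ ((d : ℝ) + q - 1) := by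
        rw [mul_assoc, ← rpow_one_add' hs0.le hsum.ne', add_sub_cancel]
    _ ≤ 2 * (M * (s / 4) ^ (1 - q) * ((72 * d * T / s) ^ d * μ.real (ball 0 1)))
          * s ^ ((d : ℝ) + q - 1) := by gcongr
    _ = 2 * M * μ.real (ball 0 1) * 4 ^ (q - 1) * (72 * d * T / s * s) ^ d := by
        rw [mul_pow]
        linear_combination (2 * M * μ.real (ball 0 1) * (72 * d * T / s) ^ d) * h4
    _ = 2 * 4 ^ (q - 1) * (72 * d) ^ (d : ℝ) * μ.real (ball 0 1) * M * T ^ d := by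
        rw [div_mul_cancel₀ _ hs0.ne', mul_pow, rpow_natCast]
        ring
    _ ≤ _ := mul_le_mul_of_nonneg_left hT2 (mul_nonneg (by positivity) hM0)

end AddHaar

end Moments

theorem velocity_weighted_bound_general (N : ℕ) (q : ℝ) (hq : 1 < q) :
    ∃ C : ℝ, 0 < C ∧
      ∀ (f : EuclideanSpace ℝ (Fin N) → ℝ) (n T : ℝ) (ubar : EuclideanSpace ℝ (Fin N)),
        Measurable f → (∀ ξ, 0 ≤ f ξ) →
        Integrable (fun ξ => (1 + ‖ξ‖ ^ 2) * f ξ) →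
        BddAbove (Set.range fun ξ => ‖ξ‖ ^ q * f ξ) →
        n = (∫ ξ, f ξ) →
        n • ubar = (∫ ξ, f ξ • ξ) →
        (N : ℝ) * n * T = (∫ ξ, ‖ξ - ubar‖ ^ 2 * f ξ) →
        0 < n → 0 < T →
        n * ‖ubar‖ ^ ((N : ℝ) + q) / ((T + ‖ubar‖ ^ 2) * T) ^ ((N : ℝ) / 2)
          ≤ C * ⨆ ξ, ‖ξ‖ ^ q * f ξ := by
  set ω := volume.real (ball (0 : EuclideanSpace ℝ (Fin N)) 1)
  have hω : 0 < ω := ENNReal.toReal_pos (measure_ball_pos _ _ one_pos).ne' measure_ball_lt_top.ne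
  set K₁ := 2 ^ (q + 1) * (2 * N) ^ ((N : ℝ) / 2) * ω
  set K₂ := 2 * 4 ^ (q - 1) * (72 * N) ^ (N : ℝ) * ω
  obtain ⟨hK₁, hK₂⟩ : 0 < K₁ ∧ 0 < K₂ := by
    rcases N.eq_zero_or_pos with rfl | hN
    · simp only [K₁, K₂, CharP.cast_eq_zero, mul_zero, zero_div, rpow_zero, mul_one]
      exact ⟨mul_pos (by positivity) hω, mul_pos (by positivity) hω⟩
    · exact ⟨mul_pos (by positivity) hω, mul_pos (by positivity) hω⟩
  refine ⟨K₁ + K₂, add_pos hK₁ hK₂, fun f n T ubar hf hf0 hI hbdd hn hmean hT _ hT0 => ?_⟩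
  have hM : ∀ ξ, ‖ξ‖ ^ q * f ξ ≤ ⨆ ξ, ‖ξ‖ ^ q * f ξ := le_ciSup hbdd
  have hM0 : 0 ≤ ⨆ ξ, ‖ξ‖ ^ q * f ξ := (mul_nonneg (by positivity) (hf0 0)).trans (hM 0)
  have hd : finrank ℝ (EuclideanSpace ℝ (Fin N)) = N := finrank_euclideanSpace_fin
  rw [div_le_iff₀ (by positivity)]
  rcases eq_or_ne ubar 0 with rfl | hu
  · rw [norm_zero, zero_rpow (by positivity), mul_zero]
    positivity
  rcases le_or_gt (8 * N * T) (‖ubar‖ ^ 2) with hlarge | hsmall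
  · have := mul_norm_rpow_le_of_sq_le_norm_sq volume hf.aestronglyMeasurable hf0 hI
      (by linarith) hM hn (by rwa [hd]) hT0 hu (by rwa [hd])
    rw [hd] at this
    exact this.trans (by gcongr; exact le_add_of_nonneg_right hK₂.le)
  · have := mul_norm_rpow_le_of_norm_sq_lt volume hf.aestronglyMeasurable hf0 hI
      hq.le hM hn hmean (by rwa [hd]) hT0 hu (by rwa [hd])
    rw [hd] at this
    exact this.trans (by gcongr; exact le_add_of_nonneg_left hK₁.le)

/-- Estimate (iii.1): n |ubar|^{N+q} / [(T + |ubar|²) T]^{N/2} ≤ C_q N_q(f) for q > 1. -/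
theorem velocity_weighted_bound (N : ℕ) (hN : 1 ≤ N) (q : ℝ) (hq : 1 < q) :
    ∃ C : ℝ, 0 < C ∧
      ∀ (f : EuclideanSpace ℝ (Fin N) → ℝ) (n T : ℝ) (ubar : EuclideanSpace ℝ (Fin N)),
        Measurable f → (∀ ξ, 0 ≤ f ξ) →
        Integrable (fun ξ => (1 + ‖ξ‖ ^ 2) * f ξ) →
        BddAbove (Set.range fun ξ => ‖ξ‖ ^ q * f ξ) →
        n = (∫ ξ, f ξ) →
        n • ubar = (∫ ξ, f ξ • ξ) →
        (N : ℝ) * n * T = (∫ ξ, ‖ξ - ubar‖ ^ 2 * f ξ) →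
        0 < n → 0 < T →
        n * ‖ubar‖ ^ ((N : ℝ) + q) / ((T + ‖ubar‖ ^ 2) * T) ^ ((N : ℝ) / 2)
          ≤ C * ⨆ ξ, ‖ξ‖ ^ q * f ξ :=
  velocity_weighted_bound_general N q hq
end

section
/- For a Maxwellian M(ξ) = n·(2πT/m)^{-N/2}·exp(−m|ξ−ū|²/(2T)) on ℝ^N, one has for all q > N+2 (or q = 0) the bound sup_ξ |ξ|^q M(ξ) ≤ C_q · [ n/T^{N/2} + n·(T+|ū|²)^{(q−N)/2} + n·|ū|^{N+q}/((T+|ū|²)T)^{N/2} ] for a constant C_q depending only on q, N, m. -/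
open MeasureTheory Real

lemma aux_rpow_add_le (a b p : ℝ) (ha : 0 ≤ a) (hb : 0 ≤ b) (hp : 0 ≤ p) :
    (a + b) ^ p ≤ 2 ^ p * (a ^ p + b ^ p) := by
  have h1 : a + b ≤ 2 * max a b := by rcases le_total a b with h | h <;> simp [max_eq_right, max_eq_left, h] <;> linarith
  calc (a + b) ^ p ≤ (2 * max a b) ^ p :=
        Real.rpow_le_rpow (by linarith) h1 hp
    _ = 2 ^ p * (max a b) ^ p := Real.mul_rpow (by norm_num) (le_max_of_le_left ha)
    _ ≤ 2 ^ p * (a ^ p + b ^ p) := by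
        gcongr 2 ^ p * ?_
        rcases max_cases a b with ⟨h, _⟩ | ⟨h, _⟩ <;> rw [h]
        · nlinarith [Real.rpow_nonneg hb p]
        · nlinarith [Real.rpow_nonneg ha p]

lemma aux_t_exp (t p : ℝ) (ht : 0 ≤ t) (hp : 0 ≤ p) :
    t ^ p * Real.exp (-t) ≤ (Nat.factorial (Nat.ceil p)) + 1 := by
  set k := Nat.ceil p
  rcases le_total t 1 with h1 | h1
  · have : t ^ p ≤ 1 := Real.rpow_le_one ht h1 hp
    have h2 : Real.exp (-t) ≤ 1 := Real.exp_le_one_iff.2 (by linarith)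
    have : t ^ p * Real.exp (-t) ≤ 1 := by
      nlinarith [Real.exp_pos (-t), Real.rpow_nonneg ht p]
    have hk : (1:ℝ) ≤ (Nat.factorial k) := by exact_mod_cast Nat.one_le_iff_ne_zero.2 (Nat.factorial_ne_zero k)
    linarith
  · have h2 : t ^ p ≤ t ^ (k:ℝ) :=
      Real.rpow_le_rpow_of_exponent_le h1 (Nat.le_ceil p)
    have h3 : t ^ (k:ℝ) = t ^ k := Real.rpow_natCast t k
    have h4 : t ^ k ≤ (Nat.factorial k) * Real.exp t := by
      have := Real.pow_div_factorial_le_exp t ht k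
      have hk : (0:ℝ) < (Nat.factorial k) := by exact_mod_cast Nat.factorial_pos k
      rw [div_le_iff₀ hk] at this; linarith [this]
    have h5 : Real.exp t * Real.exp (-t) = 1 := by
      rw [← Real.exp_add]; simp
    have hexp : 0 < Real.exp (-t) := Real.exp_pos _
    have : t ^ p * Real.exp (-t) ≤ ((Nat.factorial k) * Real.exp t) * Real.exp (-t) := by
      have : t ^ p ≤ (Nat.factorial k) * Real.exp t := by rw [← h3] at h4; linarith
      nlinarith
    rw [mul_assoc, h5, mul_one] at this
    linarith

/-- Weighted sup bound (iv.1) for a Maxwellian on ℝ^N: for q > N+2 or q = 0,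
sup_ξ |ξ|^q M(ξ) ≤ C_q [ n/T^{N/2} + n(T+|u|²)^{(q−N)/2} + n|u|^{N+q}/((T+|u|²)T)^{N/2} ]. -/
theorem maxwellian_weighted_sup_bound (N : ℕ) (hN : 1 ≤ N) (m : ℝ) (hm : 0 < m)
    (q : ℝ) (hq : (N : ℝ) + 2 < q ∨ q = 0) :
    ∃ C : ℝ, 0 < C ∧
      ∀ (n T : ℝ) (ubar : EuclideanSpace ℝ (Fin N)), 0 < n → 0 < T →
        (⨆ ξ : EuclideanSpace ℝ (Fin N),
            ‖ξ‖ ^ q * (n * (2 * Real.pi * T / m) ^ (-(N : ℝ) / 2)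
              * Real.exp (-(m * ‖ξ - ubar‖ ^ 2 / (2 * T)))))
          ≤ C * (n / T ^ ((N : ℝ) / 2) + n * (T + ‖ubar‖ ^ 2) ^ ((q - N) / 2)
              + n * ‖ubar‖ ^ ((N : ℝ) + q) / ((T + ‖ubar‖ ^ 2) * T) ^ ((N : ℝ) / 2)) := by
  have hπ := Real.pi_pos
  set K1 : ℝ := (m / (2 * Real.pi)) ^ ((N:ℝ)/2) with hK1def
  have hK1 : 0 < K1 := Real.rpow_pos_of_pos (by positivity) _
  have hA : ∀ T : ℝ, 0 < T →
      (2 * Real.pi * T / m) ^ (-(N : ℝ) / 2) = K1 / T ^ ((N:ℝ)/2) := by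
    intro T hT
    have h1 : 2 * Real.pi * T / m = (m / (2 * Real.pi))⁻¹ * T := by
      rw [inv_div]; ring
    rw [h1, neg_div, Real.rpow_neg (by positivity),
      Real.mul_rpow (by positivity) hT.le, Real.inv_rpow (by positivity),
      mul_inv, inv_inv, hK1def, div_eq_mul_inv m (2 * Real.pi)]
    exact (div_eq_mul_inv _ _).symm
  rcases hq with hq | hq
  · -- main case q > N + 2
    have hNpos : (0:ℝ) < (N:ℝ) := by exact_mod_cast hN
    have hq0 : 0 < q := by linarith
    have hqN : (N:ℝ) < q := by linarith
    set D : ℝ := (Nat.factorial (Nat.ceil (q/2))) + 1 with hDdef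
    have hD : 0 < D := by positivity
    refine ⟨2 ^ q * K1 * (D * (2/m) ^ (q/2) + 1 + 2 ^ ((N:ℝ)/2)), by positivity, ?_⟩
    intro n T ubar hn hT
    set u := ‖ubar‖ with hudef
    have hu : 0 ≤ u := norm_nonneg _
    set B1 : ℝ := n / T ^ ((N:ℝ)/2) with hB1def
    set B2 : ℝ := n * (T + u ^ 2) ^ ((q - N)/2) with hB2def
    set B3 : ℝ := n * u ^ ((N:ℝ) + q) / ((T + u ^ 2) * T) ^ ((N:ℝ)/2) with hB3def
    have hB1 : 0 ≤ B1 := by rw [hB1def]; positivity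
    have hB2 : 0 ≤ B2 := by rw [hB2def]; positivity
    have hB3 : 0 ≤ B3 := by rw [hB3def]; positivity
    apply ciSup_le
    intro ξ
    set s := ‖ξ - ubar‖ with hsdef
    have hs : 0 ≤ s := norm_nonneg _
    set P : ℝ := n * K1 / T ^ ((N:ℝ)/2) with hPdef
    have hP : 0 < P := by rw [hPdef]; positivity
    set E : ℝ := Real.exp (-(m * s ^ 2 / (2 * T))) with hEdef
    have hE1 : E ≤ 1 := Real.exp_le_one_iff.2 (neg_nonpos.2 (by positivity))
    have hE0 : 0 < E := Real.exp_pos _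
    -- bound on s^q * E
    have hsE : s ^ q * E ≤ D * (2 * T / m) ^ (q/2) := by
      set t : ℝ := m * s ^ 2 / (2 * T) with htdef
      have ht : 0 ≤ t := by rw [htdef]; positivity
      have hst : s ^ q = (2 * T / m) ^ (q/2) * t ^ (q/2) := by
        have hs2 : (2 * T / m) * t = s ^ 2 := by
          rw [htdef]; field_simp
        have h2 : s ^ q = ((s:ℝ) ^ 2) ^ (q/2) := by
          rw [← Real.rpow_natCast s 2, ← Real.rpow_mul hs]
          congr 1; push_cast; ring
        rw [h2, ← hs2, Real.mul_rpow (by positivity) ht]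
      have hDk : t ^ (q/2) * Real.exp (-t) ≤ D := aux_t_exp t (q/2) ht (by positivity)
      calc s ^ q * E = (2 * T / m) ^ (q/2) * (t ^ (q/2) * Real.exp (-t)) := by
            rw [hst, hEdef, htdef]; ring
        _ ≤ (2 * T / m) ^ (q/2) * D :=
            mul_le_mul_of_nonneg_left hDk (Real.rpow_nonneg (by positivity) _)
        _ = D * (2 * T / m) ^ (q/2) := by ring
    -- norm split
    have hξ : ‖ξ‖ ^ q ≤ 2 ^ q * (s ^ q + u ^ q) := by
      have h1 : ‖ξ‖ ≤ s + u := by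
        calc ‖ξ‖ = ‖(ξ - ubar) + ubar‖ := by rw [sub_add_cancel]
          _ ≤ s + u := norm_add_le _ _
      calc ‖ξ‖ ^ q ≤ (s + u) ^ q := Real.rpow_le_rpow (norm_nonneg _) h1 hq0.le
        _ ≤ _ := aux_rpow_add_le _ _ _ hs hu hq0.le
    -- Term 1 bound
    have hsplit : (2 * T / m) ^ (q/2) = (2/m) ^ (q/2) * T ^ (q/2) := by
      rw [show 2 * T / m = (2/m) * T by ring, Real.mul_rpow (by positivity) hT.le]
    have hTsub : T ^ ((q - (N:ℝ))/2) = T ^ (q/2) / T ^ ((N:ℝ)/2) := by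
      rw [show (q - (N:ℝ))/2 = q/2 - (N:ℝ)/2 by ring, Real.rpow_sub hT]
    have hmono : T ^ ((q - (N:ℝ))/2) ≤ (T + u ^ 2) ^ ((q - (N:ℝ))/2) :=
      Real.rpow_le_rpow hT.le (le_add_of_nonneg_right (sq_nonneg u)) (by linarith)
    have hterm1 : D * (2 * T / m) ^ (q/2) * P ≤ (D * (2/m) ^ (q/2) * K1) * B2 := by
      have heq : D * (2 * T / m) ^ (q/2) * P
          = (D * (2/m) ^ (q/2) * K1) * (n * T ^ ((q - (N:ℝ))/2)) := by
        rw [hsplit, hTsub, hPdef]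
        field_simp
      rw [heq, hB2def]
      exact mul_le_mul_of_nonneg_left
        (mul_le_mul_of_nonneg_left hmono hn.le) (by positivity)
    -- Term 2 bound
    have hterm2 : u ^ q * P ≤ K1 * B2 + K1 * 2 ^ ((N:ℝ)/2) * B3 := by
      have huq : u ^ q = (u ^ 2 : ℝ) ^ (q/2) := by
        rw [← Real.rpow_natCast u 2, ← Real.rpow_mul hu]
        congr 1; push_cast; ring
      have hc3B3 : 0 ≤ K1 * 2 ^ ((N:ℝ)/2) * B3 :=
        mul_nonneg (mul_nonneg hK1.le (Real.rpow_nonneg (by norm_num) _)) hB3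
      have hc2B2 : 0 ≤ K1 * B2 := mul_nonneg hK1.le hB2
      rcases le_total (u ^ 2) T with hc | hc
      · -- u² ≤ T : use B2
        have h1 : u ^ q ≤ T ^ (q/2) := by
          rw [huq]; exact Real.rpow_le_rpow (by positivity) hc (by positivity)
        have h2 : u ^ q * P ≤ K1 * B2 := by
          have h3 : T ^ (q/2) * P = K1 * (n * T ^ ((q - (N:ℝ))/2)) := by
            rw [hTsub, hPdef]; field_simp
          calc u ^ q * P ≤ T ^ (q/2) * P := mul_le_mul_of_nonneg_right h1 hP.le
            _ = K1 * (n * T ^ ((q - (N:ℝ))/2)) := h3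
            _ ≤ K1 * B2 := by
                rw [hB2def]
                exact mul_le_mul_of_nonneg_left
                  (mul_le_mul_of_nonneg_left hmono hn.le) hK1.le
        linarith
      · -- T ≤ u² : use B3
        have hupos : 0 < u := by
          rcases hu.lt_or_eq with h | h
          · exact h
          · exfalso; rw [← h] at hc; norm_num at hc; linarith
        have key : (T + u ^ 2) ^ ((N:ℝ)/2) ≤ 2 ^ ((N:ℝ)/2) * u ^ ((N:ℝ)) := by
          have h1 : T + u ^ 2 ≤ 2 * u ^ 2 := by linarith
          have h2 : (u ^ 2 : ℝ) ^ ((N:ℝ)/2) = u ^ ((N:ℝ)) := by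
            rw [← Real.rpow_natCast u 2, ← Real.rpow_mul hu]
            congr 1; push_cast; ring
          calc (T + u ^ 2) ^ ((N:ℝ)/2) ≤ (2 * u ^ 2) ^ ((N:ℝ)/2) :=
                Real.rpow_le_rpow (by positivity) h1 (by positivity)
            _ = 2 ^ ((N:ℝ)/2) * (u ^ 2 : ℝ) ^ ((N:ℝ)/2) :=
                Real.mul_rpow (by norm_num) (by positivity)
            _ = 2 ^ ((N:ℝ)/2) * u ^ ((N:ℝ)) := by rw [h2]
        have hNq : u ^ ((N:ℝ) + q) = u ^ ((N:ℝ)) * u ^ q := Real.rpow_add hupos _ _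
        have hden : ((T + u ^ 2) * T) ^ ((N:ℝ)/2)
            = (T + u ^ 2) ^ ((N:ℝ)/2) * T ^ ((N:ℝ)/2) :=
          Real.mul_rpow (by positivity) hT.le
        have key2 : 1 / T ^ ((N:ℝ)/2)
            ≤ 2 ^ ((N:ℝ)/2) * u ^ ((N:ℝ)) / ((T + u ^ 2) ^ ((N:ℝ)/2) * T ^ ((N:ℝ)/2)) := by
          rw [div_le_div_iff₀ (by positivity) (by positivity), one_mul]
          calc (T + u ^ 2) ^ ((N:ℝ)/2) * T ^ ((N:ℝ)/2)
              ≤ (2 ^ ((N:ℝ)/2) * u ^ ((N:ℝ))) * T ^ ((N:ℝ)/2) :=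
                mul_le_mul_of_nonneg_right key (Real.rpow_nonneg hT.le _)
            _ = 2 ^ ((N:ℝ)/2) * u ^ ((N:ℝ)) * T ^ ((N:ℝ)/2) := by ring
        have h2 : u ^ q * P ≤ K1 * 2 ^ ((N:ℝ)/2) * B3 := by
          have hmul := mul_le_mul_of_nonneg_left key2
            (show 0 ≤ n * K1 * u ^ q by positivity)
          have hl : u ^ q * P = (n * K1 * u ^ q) * (1 / T ^ ((N:ℝ)/2)) := by
            rw [hPdef]; ring
          have hr : (n * K1 * u ^ q)
              * (2 ^ ((N:ℝ)/2) * u ^ ((N:ℝ)) / ((T + u ^ 2) ^ ((N:ℝ)/2) * T ^ ((N:ℝ)/2)))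
              = K1 * 2 ^ ((N:ℝ)/2) * B3 := by
            rw [hB3def, hden, hNq]; ring
          rw [hl, ← hr]; exact hmul
        linarith
    -- assemble pointwise bound
    have h5 : (0:ℝ) < 2 ^ q := Real.rpow_pos_of_pos (by norm_num) q
    have hmain : ‖ξ‖ ^ q * (n * (2 * Real.pi * T / m) ^ (-(N:ℝ)/2) * E)
        ≤ 2 ^ q * (D * (2 * T / m) ^ (q/2) * P + u ^ q * P) := by
      rw [hA T hT]
      have hfac : n * (K1 / T ^ ((N:ℝ)/2)) * E = P * E := by rw [hPdef]; ring
      rw [hfac]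
      have h1 : ‖ξ‖ ^ q * (P * E) ≤ (2 ^ q * (s ^ q + u ^ q)) * (P * E) :=
        mul_le_mul_of_nonneg_right hξ (by positivity)
      have h2 : (2 ^ q * (s ^ q + u ^ q)) * (P * E)
          = 2 ^ q * ((s ^ q * E) * P + (u ^ q * E) * P) := by ring
      have h3 : (s ^ q * E) * P ≤ D * (2 * T / m) ^ (q/2) * P :=
        mul_le_mul_of_nonneg_right hsE hP.le
      have h4 : (u ^ q * E) * P ≤ u ^ q * P := by
        have h4' : u ^ q * E ≤ u ^ q * 1 :=
          mul_le_mul_of_nonneg_left hE1 (Real.rpow_nonneg hu q)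
        rw [mul_one] at h4'
        exact mul_le_mul_of_nonneg_right h4' hP.le
      calc ‖ξ‖ ^ q * (P * E) ≤ (2 ^ q * (s ^ q + u ^ q)) * (P * E) := h1
        _ = 2 ^ q * ((s ^ q * E) * P + (u ^ q * E) * P) := h2
        _ ≤ 2 ^ q * (D * (2 * T / m) ^ (q/2) * P + u ^ q * P) :=
            mul_le_mul_of_nonneg_left (add_le_add h3 h4) h5.le
    have hstep2 : 2 ^ q * (D * (2 * T / m) ^ (q/2) * P + u ^ q * P)
        ≤ 2 ^ q * ((D * (2/m) ^ (q/2) * K1) * B2 + (K1 * B2 + K1 * 2 ^ ((N:ℝ)/2) * B3)) :=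
      mul_le_mul_of_nonneg_left (add_le_add hterm1 hterm2) h5.le
    have hc1 : (0:ℝ) ≤ D * (2/m) ^ (q/2) := by positivity
    have hc3 : (0:ℝ) ≤ 2 ^ ((N:ℝ)/2) := Real.rpow_nonneg (by norm_num) _
    have hR : 0 ≤ 2 ^ q * K1 * ((D * (2/m) ^ (q/2) + 1 + 2 ^ ((N:ℝ)/2)) * B1
        + 2 ^ ((N:ℝ)/2) * B2 + (D * (2/m) ^ (q/2) + 1) * B3) :=
      mul_nonneg (mul_nonneg h5.le hK1.le)
        (add_nonneg (add_nonneg (mul_nonneg (by linarith) hB1) (mul_nonneg hc3 hB2))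
          (mul_nonneg (by linarith) hB3))
    have hident : 2 ^ q * K1 * (D * (2/m) ^ (q/2) + 1 + 2 ^ ((N:ℝ)/2)) * (B1 + B2 + B3)
        = 2 ^ q * ((D * (2/m) ^ (q/2) * K1) * B2 + (K1 * B2 + K1 * 2 ^ ((N:ℝ)/2) * B3))
          + 2 ^ q * K1 * ((D * (2/m) ^ (q/2) + 1 + 2 ^ ((N:ℝ)/2)) * B1
            + 2 ^ ((N:ℝ)/2) * B2 + (D * (2/m) ^ (q/2) + 1) * B3) := by ring
    linarith [hmain, hstep2]
  · -- q = 0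
    subst hq
    refine ⟨K1, hK1, ?_⟩
    intro n T ubar hn hT
    have hB2 : 0 ≤ n * (T + ‖ubar‖ ^ 2) ^ ((0 - (N:ℝ))/2) := by positivity
    have hB3 : 0 ≤ n * ‖ubar‖ ^ ((N:ℝ) + 0) / ((T + ‖ubar‖ ^ 2) * T) ^ ((N:ℝ)/2) := by positivity
    apply ciSup_le
    intro ξ
    rw [Real.rpow_zero, one_mul, hA T hT]
    have hE1 : Real.exp (-(m * ‖ξ - ubar‖ ^ 2 / (2 * T))) ≤ 1 :=
      Real.exp_le_one_iff.2 (neg_nonpos.2 (by positivity))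
    have hE0 : 0 < Real.exp (-(m * ‖ξ - ubar‖ ^ 2 / (2 * T))) := Real.exp_pos _
    have h1 : n * (K1 / T ^ ((N:ℝ)/2)) * Real.exp (-(m * ‖ξ - ubar‖ ^ 2 / (2 * T)))
        ≤ K1 * (n / T ^ ((N:ℝ)/2)) := by
      have hP : 0 ≤ n * (K1 / T ^ ((N:ℝ)/2)) := by positivity
      calc n * (K1 / T ^ ((N:ℝ)/2)) * Real.exp (-(m * ‖ξ - ubar‖ ^ 2 / (2 * T)))
          ≤ n * (K1 / T ^ ((N:ℝ)/2)) * 1 := mul_le_mul_of_nonneg_left hE1 hP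
        _ = K1 * (n / T ^ ((N:ℝ)/2)) := by ring
    linarith [h1, mul_nonneg hK1.le hB2, mul_nonneg hK1.le hB3]
end

section
/- Positivity of the mixture internal temperature Θ₂₁: assume 0 < (l₁/(l₁+l₂))·ε ≤ 1, Θ₁, Θ₂ ≥ 0, and the constraints ((m₁/m₂)ε−1)/(1+(m₁/m₂)ε) ≤ β ≤ 1, 0 ≤ γ̃ ≤ (m₁/l₁)(1−β)[(1+(m₁/m₂)ε)β + 1 − (m₁/m₂)ε], with η̄₁₂ = β·η̄₁ + (1−β)·η̄₂ and η̄₂₁ = η̄₂ − (m₁/m₂)ε(1−β)(η̄₂−η̄₁). Then Θ₂₁ := ε·(l₁/(l₁+l₂))·Θ₁ + (1 − ε·l₁/(l₁+l₂))·Θ₂ − (l₁/l₂)·ε·γ̃·|η̄₁−η̄₂|² − ε·(m₁/l₂)·(|η̄₁₂|² − |η̄₁|²) − (m₂/l₂)·(|η̄₂₁|² − |η̄₂|²) is nonnegative. -/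
open Real

/-! The interaction terms conserve momentum, so the kinetic energy they remove from the two
species is a multiple of `‖η₁ - η₂‖²`. Collecting it with the `γ̃`-term turns `Θ₂₁` into a convex
combination of `Θ₁` and `Θ₂` plus `(ε l₁ / l₂) ‖η₁ - η₂‖² (m₁ / l₁ (1 - β) K - γ̃)`, where `K` is
the bracket in the upper bound on `γ̃`; that bound says exactly that the last factor is
nonnegative. -/

section KineticEnergy

variable {E : Type*} [NormedAddCommGroup E] [InnerProductSpace ℝ E]

lemma norm_add_smul_sq_sub_norm_sq (x d : E) (t : ℝ) :
    ‖x + t • d‖ ^ 2 - ‖x‖ ^ 2 = 2 * t * inner ℝ x d + t ^ 2 * ‖d‖ ^ 2 := by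
  rw [norm_add_sq_real, inner_smul_right, norm_smul, mul_pow, Real.norm_eq_abs, sq_abs]
  ring

/-- `b * s = a * t` says that moving `x` by `t • (y - x)` and `y` by `-s • (y - x)` conserves
the momentum `a x + b y`. -/
lemma kinetic_energy_change_of_momentum_conservation (x y : E) {a b s t : ℝ}
    (hst : b * s = a * t) :
    a * (‖x + t • (y - x)‖ ^ 2 - ‖x‖ ^ 2) + b * (‖y - s • (y - x)‖ ^ 2 - ‖y‖ ^ 2)
      = -(a * t * (2 - t - s) * ‖x - y‖ ^ 2) := by
  have hy : y - s • (y - x) = y + (-s) • (y - x) := by rw [neg_smul, sub_eq_add_neg]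
  have hxy : inner ℝ x (y - x) - inner ℝ y (y - x) = -‖x - y‖ ^ 2 := by
    rw [← inner_sub_left, ← neg_sub x y, inner_neg_right, real_inner_self_eq_norm_sq]
  rw [hy, norm_add_smul_sq_sub_norm_sq, norm_add_smul_sq_sub_norm_sq, norm_sub_rev y x]
  linear_combination (2 * a * t) * hxy + (s * ‖x - y‖ ^ 2 - 2 * inner ℝ y (y - x)) * hst

end KineticEnergy

theorem Theta21_nonneg_general (M l₁ l₂ : ℕ) (hl₁ : 1 ≤ l₁)
    (m₁ m₂ ε β γt Θ₁ Θ₂ : ℝ) (hm₂ : 0 < m₂)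
    (hε0 : 0 < (l₁ : ℝ) / ((l₁ : ℝ) + l₂) * ε) (hε1 : (l₁ : ℝ) / ((l₁ : ℝ) + l₂) * ε ≤ 1)
    (hΘ₁ : 0 ≤ Θ₁) (hΘ₂ : 0 ≤ Θ₂)
    (hγu : γt ≤ m₁ / l₁ * (1 - β) * ((1 + m₁ / m₂ * ε) * β + 1 - m₁ / m₂ * ε))
    (η₁ η₂ η₁₂ η₂₁ : EuclideanSpace ℝ (Fin M))
    (hη₁₂ : η₁₂ = β • η₁ + (1 - β) • η₂)
    (hη₂₁ : η₂₁ = η₂ - (m₁ / m₂ * ε * (1 - β)) • (η₂ - η₁)) :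
    0 ≤ ε * ((l₁ : ℝ) / ((l₁ : ℝ) + l₂)) * Θ₁ + (1 - ε * (l₁ : ℝ) / ((l₁ : ℝ) + l₂)) * Θ₂
        - (l₁ : ℝ) / l₂ * ε * γt * ‖η₁ - η₂‖ ^ 2
        - ε * m₁ / l₂ * (‖η₁₂‖ ^ 2 - ‖η₁‖ ^ 2)
        - m₂ / l₂ * (‖η₂₁‖ ^ 2 - ‖η₂‖ ^ 2) := by
  rw [mul_div_assoc ε]
  set a : ℝ := (l₁ : ℝ) / ((l₁ : ℝ) + l₂)
  set K : ℝ := (1 + m₁ / m₂ * ε) * β + 1 - m₁ / m₂ * ε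
  have hε : 0 < ε := pos_of_mul_pos_right hε0 (by positivity)
  have hl₁_ne : (l₁ : ℝ) ≠ 0 := by positivity
  have hη₁₂' : η₁₂ = η₁ + (1 - β) • (η₂ - η₁) := by
    rw [hη₁₂]; module
  have hexchange : ε * m₁ * (‖η₁₂‖ ^ 2 - ‖η₁‖ ^ 2) + m₂ * (‖η₂₁‖ ^ 2 - ‖η₂‖ ^ 2)
      = -(ε * m₁ * (1 - β) * K * ‖η₁ - η₂‖ ^ 2) := by
    rw [hη₁₂', hη₂₁, kinetic_energy_change_of_momentum_conservation η₁ η₂ (by field_simp)]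
    ring
  have hsplit : ε * a * Θ₁ + (1 - ε * a) * Θ₂
        - (l₁ : ℝ) / l₂ * ε * γt * ‖η₁ - η₂‖ ^ 2
        - ε * m₁ / l₂ * (‖η₁₂‖ ^ 2 - ‖η₁‖ ^ 2) - m₂ / l₂ * (‖η₂₁‖ ^ 2 - ‖η₂‖ ^ 2)
      = (a * ε * Θ₁ + (1 - a * ε) * Θ₂)
        + ε * l₁ / l₂ * ‖η₁ - η₂‖ ^ 2 * (m₁ / l₁ * (1 - β) * K - γt) := by
    have hm₁ : (l₁ : ℝ) * (m₁ / l₁) = m₁ := mul_div_cancel₀ m₁ hl₁_ne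
    linear_combination (-1 / (l₂ : ℝ)) * hexchange
      - (ε / l₂ * ‖η₁ - η₂‖ ^ 2 * (1 - β) * K) * hm₁
  rw [hsplit]
  have hΘ : 0 ≤ a * ε * Θ₁ + (1 - a * ε) * Θ₂ :=
    add_nonneg (mul_nonneg hε0.le hΘ₁) (mul_nonneg (sub_nonneg.2 hε1) hΘ₂)
  have hγ : 0 ≤ ε * l₁ / l₂ * ‖η₁ - η₂‖ ^ 2 * (m₁ / l₁ * (1 - β) * K - γt) :=
    mul_nonneg (by positivity) (sub_nonneg.2 hγu)
  exact add_nonneg hΘ hγ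

/-- Positivity of the mixture internal-energy temperature Θ₂₁ in the two-species
polyatomic BGK model. -/
theorem Theta21_nonneg (M l₁ l₂ : ℕ) (hl₁ : 1 ≤ l₁) (hl₂ : 1 ≤ l₂)
    (m₁ m₂ ε β γt Θ₁ Θ₂ : ℝ) (hm₁ : 0 < m₁) (hm₂ : 0 < m₂)
    (hε0 : 0 < (l₁ : ℝ) / ((l₁ : ℝ) + l₂) * ε) (hε1 : (l₁ : ℝ) / ((l₁ : ℝ) + l₂) * ε ≤ 1)
    (hΘ₁ : 0 ≤ Θ₁) (hΘ₂ : 0 ≤ Θ₂)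
    (hβl : (m₁ / m₂ * ε - 1) / (1 + m₁ / m₂ * ε) ≤ β) (hβu : β ≤ 1)
    (hγ0 : 0 ≤ γt)
    (hγu : γt ≤ m₁ / l₁ * (1 - β) * ((1 + m₁ / m₂ * ε) * β + 1 - m₁ / m₂ * ε))
    (η₁ η₂ η₁₂ η₂₁ : EuclideanSpace ℝ (Fin M))
    (hη₁₂ : η₁₂ = β • η₁ + (1 - β) • η₂)
    (hη₂₁ : η₂₁ = η₂ - (m₁ / m₂ * ε * (1 - β)) • (η₂ - η₁)) :
    0 ≤ ε * ((l₁ : ℝ) / ((l₁ : ℝ) + l₂)) * Θ₁ + (1 - ε * (l₁ : ℝ) / ((l₁ : ℝ) + l₂)) * Θ₂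
        - (l₁ : ℝ) / l₂ * ε * γt * ‖η₁ - η₂‖ ^ 2
        - ε * m₁ / l₂ * (‖η₁₂‖ ^ 2 - ‖η₁‖ ^ 2)
        - m₂ / l₂ * (‖η₂₁‖ ^ 2 - ‖η₂‖ ^ 2) :=
  Theta21_nonneg_general M l₁ l₂ hl₁ m₁ m₂ ε β γt Θ₁ Θ₂ hm₂ hε0 hε1 hΘ₁ hΘ₂ hγu η₁ η₂ η₁₂ η₂₁ hη₁₂
    hη₂₁
end
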